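/- arXiv:1102.0362 — 2 statements merged into one kernel-verified Lean document; each statement's English description precedes it below -/
import Mathlib

section
/- Suppose that for every natural number n, U(2^n) is a K-subspace of A(2^n) such that A(2^n)U(2^n) + U(2^n)A(2^n) ⊆ U(2^{n+1}). Then for all natural numbers p > m and every integer q with 0 ≤ q < 2^{p−m}, one has A(q·2^m)·U(2^m)·A(2^p − (q+1)·2^m) ⊆ U(2^p). -/
/-!
Since `A(a + b) = A(a) A(b)` and `A(0) = K`, we have `A(n) = A(1)^n`, so the claim is a statement
about an element `g` of an ordered monoid and a sequence `U` with `g^(2^n) U n, U n g^(2^n) ≤ U (n+1)`.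
By induction on `d`, `g^(a 2^m) (U m) g^(b 2^m) ≤ U (m + d)` whenever `a + 1 + b = 2^d`: the block
`U m` lies in one of the two halves of length `2^(m+d)`, the induction hypothesis absorbs that half
into `U (m + d)`, and the other half is absorbed by the hypothesis on `U`.
-/

noncomputable section

/-- The free associative algebra `K⟨x,y⟩` on two generators. -/
abbrev FA (K : Type*) [Field K] := FreeAlgebra K (Fin 2)

/-- The element of `K⟨x,y⟩` given by a word (a list of letters). -/
def wordOf (K : Type*) [Field K] (l : List (Fin 2)) : FA K :=
  (l.map (FreeAlgebra.ι K)).prod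

/-- `a` is a word of length `n` over the two generators. -/
def IsWord (K : Type*) [Field K] (n : ℕ) (a : FA K) : Prop :=
  ∃ l : List (Fin 2), l.length = n ∧ a = wordOf K l

/-- `A(n)`: the span of all words of length `n`. -/
def Aspan (K : Type*) [Field K] (n : ℕ) : Submodule K (FA K) :=
  Submodule.span K {a | IsWord K n a}

section OrderedMonoid

variable {M : Type*} [Monoid M] [Preorder M] [MulLeftMono M] [MulRightMono M]

theorem pow_mul_mul_pow_le_of_add_one_add_eq_two_pow {g : M} {U : ℕ → M}
    (hl : ∀ n, g ^ 2 ^ n * U n ≤ U (n + 1)) (hr : ∀ n, U n * g ^ 2 ^ n ≤ U (n + 1))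
    (m d : ℕ) {a b : ℕ} (hab : a + 1 + b = 2 ^ d) :
    g ^ (a * 2 ^ m) * U m * g ^ (b * 2 ^ m) ≤ U (m + d) := by
  induction d generalizing a b with
  | zero =>
    obtain ⟨rfl, rfl⟩ : a = 0 ∧ b = 0 := by simp at hab; omega
    simp
  | succ d ih =>
    have half : 2 ^ d * 2 ^ m = 2 ^ (m + d) := by rw [← pow_add, add_comm]
    rcases lt_or_ge a (2 ^ d) with ha | ha
    · obtain ⟨b, rfl⟩ : ∃ b', b = b' + 2 ^ d := ⟨b - 2 ^ d, by rw [pow_succ] at hab; omega⟩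
      calc g ^ (a * 2 ^ m) * U m * g ^ ((b + 2 ^ d) * 2 ^ m)
          = g ^ (a * 2 ^ m) * U m * g ^ (b * 2 ^ m) * g ^ 2 ^ (m + d) := by
            rw [add_mul, half, pow_add, mul_assoc _ (g ^ _)]
        _ ≤ U (m + d) * g ^ 2 ^ (m + d) :=
            mul_le_mul_left (ih (by rw [pow_succ] at hab; omega)) _
        _ ≤ U (m + (d + 1)) := hr _
    · obtain ⟨a, rfl⟩ : ∃ a', a = 2 ^ d + a' := ⟨a - 2 ^ d, by omega⟩
      calc g ^ ((2 ^ d + a) * 2 ^ m) * U m * g ^ (b * 2 ^ m)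
          = g ^ 2 ^ (m + d) * (g ^ (a * 2 ^ m) * U m * g ^ (b * 2 ^ m)) := by
            rw [add_mul, half, pow_add]
            simp only [mul_assoc]
        _ ≤ g ^ 2 ^ (m + d) * U (m + d) :=
            mul_le_mul_right (ih (by rw [pow_succ] at hab; omega)) _
        _ ≤ U (m + (d + 1)) := hl _

end OrderedMonoid

theorem wordOf_append (K : Type*) [Field K] (l₁ l₂ : List (Fin 2)) :
    wordOf K (l₁ ++ l₂) = wordOf K l₁ * wordOf K l₂ := by
  simp [wordOf]

theorem Aspan_add (K : Type*) [Field K] (a b : ℕ) :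
    Aspan K (a + b) = Aspan K a * Aspan K b := by
  apply le_antisymm
  · rw [Aspan, Submodule.span_le]
    rintro x ⟨l, hl, rfl⟩
    rw [← List.take_append_drop a l, wordOf_append]
    exact Submodule.mul_mem_mul (Submodule.subset_span ⟨l.take a, by simp [hl], rfl⟩)
      (Submodule.subset_span ⟨l.drop a, by simp [hl], rfl⟩)
  · rw [Aspan, Aspan, Aspan, Submodule.span_mul_span]
    apply Submodule.span_mono
    rintro x ⟨u, ⟨l₁, rfl, rfl⟩, v, ⟨l₂, rfl, rfl⟩, rfl⟩
    exact ⟨l₁ ++ l₂, List.length_append, (wordOf_append K l₁ l₂).symm⟩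

theorem Aspan_zero (K : Type*) [Field K] : Aspan K 0 = 1 := by
  rw [Aspan, Submodule.one_eq_span]
  congr 1
  ext x
  simp [IsWord, wordOf, List.length_eq_zero_iff]

theorem Aspan_eq_pow (K : Type*) [Field K] (n : ℕ) : Aspan K n = Aspan K 1 ^ n := by
  induction n with
  | zero => rw [Aspan_zero, pow_zero]
  | succ n ih => rw [Aspan_add, ih, pow_succ]

theorem equation_13_general {K : Type*} [Field K] (U : ℕ → Submodule K (FA K))
    (hU_mul : ∀ n, Aspan K (2 ^ n) * U n ⊔ U n * Aspan K (2 ^ n) ≤ U (n + 1)) :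
    ∀ p m q : ℕ, m < p → q < 2 ^ (p - m) →
      Aspan K (q * 2 ^ m) * U m * Aspan K (2 ^ p - (q + 1) * 2 ^ m) ≤ U p := by
  intro p m q hmp hq
  obtain ⟨d, rfl⟩ : ∃ d, p = m + d := ⟨p - m, by omega⟩
  rw [Nat.add_sub_cancel_left] at hq
  have hexp : 2 ^ (m + d) - (q + 1) * 2 ^ m = (2 ^ d - q - 1) * 2 ^ m := by
    rw [Nat.sub_sub, Nat.sub_mul, pow_add, mul_comm (2 ^ m)]
  rw [hexp, Aspan_eq_pow K (q * 2 ^ m), Aspan_eq_pow K ((2 ^ d - q - 1) * 2 ^ m)]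
  have hU_pow n := Aspan_eq_pow K (2 ^ n) ▸ sup_le_iff.mp (hU_mul n)
  exact pow_mul_mul_pow_le_of_add_one_add_eq_two_pow (fun n ↦ (hU_pow n).1)
    (fun n ↦ (hU_pow n).2) m d (by omega)

/-- **Equation (13).** If `U(2^n) ⊆ A(2^n)` satisfies
`A(2^n)U(2^n) + U(2^n)A(2^n) ⊆ U(2^{n+1})` for all `n`, then for `p > m` and
`0 ≤ q < 2^{p-m}` one has `A(q·2^m)·U(2^m)·A(2^p - (q+1)·2^m) ⊆ U(2^p)`. -/
theorem equation_13 {K : Type*} [Field K] (U : ℕ → Submodule K (FA K))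
    (hU_le : ∀ n, U n ≤ Aspan K (2 ^ n))
    (hU_mul : ∀ n, Aspan K (2 ^ n) * U n ⊔ U n * Aspan K (2 ^ n) ≤ U (n + 1)) :
    ∀ p m q : ℕ, m < p → q < 2 ^ (p - m) →
      Aspan K (q * 2 ^ m) * U m * Aspan K (2 ^ p - (q + 1) * 2 ^ m) ≤ U p :=
  equation_13_general U hU_mul
end
end

section
/- Let K be a field, let n, p, d be positive natural numbers with n ≥ p, and let W be a d-dimensional K-subspace of A = K⟨x,y⟩ spanned by d nonempty words over x and y, each of length at most p. Then there is a K-subspace Y of A(n) whose dimension is at most (n+1)^d·(2p^2)·4^p such that A·y^{2n}·A ⊆ Σ_{k=0}^{∞} A(kn)·Y·A for every y ∈ W. -/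
/-!
Write `y = ∑ cᵢ wᵢ` and let `B_h` be the sum of the `cᵢ wᵢ` with `|wᵢ| > h`. Cutting each term of
`y ^ j`, a product of `j` words, right after its first factor that ends beyond degree `f < j` gives
`y ^ j = ∑_{m < j} ∑_{g ≤ f} (y ^ m)_g · B_{f - g} · y ^ (j - 1 - m)`, with `(·)_g` the degree-`g`
part. It telescopes from
`(y ^ m)_{≤ f} · y = (y ^ (m + 1))_{≤ f} + ∑_{g ≤ f} (y ^ m)_g · B_{f - g}`.

Grouping the products by letter counts `e`, `(y ^ m)_g` is a combination of symmetrized words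
`symWord e`, which do not depend on `y`. Hence, for `m ≤ n`, each `s · (y ^ m)_g · t` of degree `n`
with `|s|, |t| < p` lies in the space `Y ⊆ A(n)` spanned by at most `(p 2 ^ p) ^ 2 (n + 1) ^ d`
elements `s · symWord e · t`. Cutting at `f = n - |s|` and splitting the crossing word at degree `f`
gives `s · y ^ j · A ⊆ Y · A` for `|s| < p` and `j > n`; cutting at the first multiple `k n ≥ |u|`
then gives `u · y ^ (2 n) · A ⊆ A(k n) · Y · A` for every word `u`.
-/

open Module

noncomputable section

open Finset

namespace FreeWords

variable {K : Type*} [Field K]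

@[simp] lemma wordOf_nil : wordOf K [] = 1 := rfl

lemma wordOf_append (a b : List (Fin 2)) : wordOf K (a ++ b) = wordOf K a * wordOf K b := by
  simp [wordOf]

lemma wordOf_mem_Aspan (l : List (Fin 2)) : wordOf K l ∈ Aspan K l.length :=
  Submodule.subset_span ⟨l, rfl, rfl⟩

lemma mul_mem_Aspan {a b : ℕ} {x z : FA K} (hx : x ∈ Aspan K a) (hz : z ∈ Aspan K b) :
    x * z ∈ Aspan K (a + b) := by
  have hle : Aspan K a * Aspan K b ≤ Aspan K (a + b) := by
    rw [Aspan, Aspan, Submodule.span_mul_span, Submodule.span_le]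
    rintro _ ⟨_, ⟨s, rfl, rfl⟩, _, ⟨t, rfl, rfl⟩, rfl⟩
    exact Submodule.subset_span ⟨s ++ t, List.length_append, (wordOf_append s t).symm⟩
  exact hle (Submodule.mul_mem_mul hx hz)

lemma span_range_wordOf : Submodule.span K (Set.range (wordOf K)) = ⊤ := by
  refine eq_top_iff.2 fun x _ => ?_
  have hx : x ∈ Subalgebra.toSubmodule (Algebra.adjoin K (Set.range (FreeAlgebra.ι K))) := by
    simp [FreeAlgebra.adjoin_range_ι]
  rw [Algebra.adjoin_eq_span] at hx
  refine Submodule.span_mono ?_ hx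
  intro z hz
  obtain ⟨s, hs, rfl⟩ := Submonoid.exists_list_of_mem_closure hz
  clear hz
  induction s with
  | nil => exact ⟨[], rfl⟩
  | cons a s ih =>
    obtain ⟨i, rfl⟩ := hs a List.mem_cons_self
    obtain ⟨t, ht⟩ := ih fun b hb => hs b (List.mem_cons_of_mem _ hb)
    exact ⟨i :: t, by simp [wordOf, ← ht]⟩

section Sequences

variable {d : ℕ} (l : Fin d → List (Fin 2)) (c : Fin d → K)

variable (K) in
def wordProd {m : ℕ} (σ : Fin m → Fin d) : FA K :=
  wordOf K (List.ofFn fun j => l (σ j)).flatten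

def seqCoeff {m : ℕ} (σ : Fin m → Fin d) : K := ∏ j, c (σ j)

def seqLength {m : ℕ} (σ : Fin m → Fin d) : ℕ := ∑ j, (l (σ j)).length

def seqCount {m : ℕ} (σ : Fin m → Fin d) (i : Fin d) : ℕ := #{j | σ j = i}

def wordComb : FA K := ∑ i, c i • wordOf K (l i)

def seqMonomial {m : ℕ} (σ : Fin m → Fin d) : FA K := seqCoeff c σ • wordProd K l σ

def homogPart (m g : ℕ) : FA K :=
  ∑ σ : Fin m → Fin d with seqLength l σ = g, seqMonomial l c σ

def truncPow (f m : ℕ) : FA K :=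
  ∑ σ : Fin m → Fin d with seqLength l σ ≤ f, seqMonomial l c σ

def longPart (h : ℕ) : FA K := ∑ i with h < (l i).length, c i • wordOf K (l i)

lemma wordProd_snoc {m : ℕ} (σ : Fin m → Fin d) (i : Fin d) :
    wordProd K l (Fin.snoc σ i) = wordProd K l σ * wordOf K (l i) := by
  rw [wordProd, wordProd, List.ofFn_succ']
  simp [wordOf_append]

lemma seqCoeff_snoc {m : ℕ} (σ : Fin m → Fin d) (i : Fin d) :
    seqCoeff c (Fin.snoc σ i) = seqCoeff c σ * c i := by
  simp [seqCoeff, Fin.prod_univ_castSucc]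

lemma seqLength_snoc {m : ℕ} (σ : Fin m → Fin d) (i : Fin d) :
    seqLength l (Fin.snoc σ i) = seqLength l σ + (l i).length := by
  simp [seqLength, Fin.sum_univ_castSucc]

lemma wordProd_mem_Aspan {m : ℕ} (σ : Fin m → Fin d) :
    wordProd K l σ ∈ Aspan K (seqLength l σ) := by
  have h := wordOf_mem_Aspan (K := K) (List.ofFn fun j => l (σ j)).flatten
  rwa [List.length_flatten, List.map_ofFn, List.sum_ofFn] at h

lemma le_seqLength (hl : ∀ i, l i ≠ []) {m : ℕ} (σ : Fin m → Fin d) :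
    m ≤ seqLength l σ := by
  calc m = ∑ _j : Fin m, 1 := by simp
    _ ≤ seqLength l σ := sum_le_sum fun j _ => List.length_pos_iff.2 (hl (σ j))

lemma sum_seqCount {m : ℕ} (σ : Fin m → Fin d) : ∑ i, seqCount σ i = m := by
  simpa [seqCount] using (card_eq_sum_card_fiberwise (s := univ) fun j _ => mem_univ (σ j)).symm

lemma seqLength_eq_sum_seqCount {m : ℕ} (σ : Fin m → Fin d) :
    seqLength l σ = ∑ i, seqCount σ i * (l i).length := by
  rw [seqLength, ← sum_fiberwise univ σ]
  refine sum_congr rfl fun i _ => ?_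
  rw [sum_congr rfl fun j hj => by rw [(mem_filter.1 hj).2], sum_const, smul_eq_mul, seqCount]

lemma seqCoeff_eq_prod_pow_seqCount {m : ℕ} (σ : Fin m → Fin d) :
    seqCoeff c σ = ∏ i, c i ^ seqCount σ i := by
  rw [seqCoeff, ← prod_fiberwise univ σ]
  refine prod_congr rfl fun i _ => ?_
  rw [prod_congr rfl fun j hj => by rw [(mem_filter.1 hj).2], prod_const, seqCount]

lemma homogPart_eq_zero (hl : ∀ i, l i ≠ []) {m g : ℕ} (h : g < m) : homogPart l c m g = 0 :=
  sum_eq_zero fun σ hσ => absurd (mem_filter.1 hσ).2 (by have := le_seqLength l hl σ; omega)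

lemma homogPart_mem_Aspan (m g : ℕ) : homogPart l c m g ∈ Aspan K g :=
  Submodule.sum_mem _ fun σ hσ =>
    Submodule.smul_mem _ _ ((mem_filter.1 hσ).2 ▸ wordProd_mem_Aspan l σ)

lemma truncPow_zero (f : ℕ) : truncPow l c f 0 = 1 := by
  simp [truncPow, seqLength, seqMonomial, seqCoeff, wordProd]

lemma truncPow_eq_zero (hl : ∀ i, l i ≠ []) {f m : ℕ} (h : f < m) : truncPow l c f m = 0 :=
  sum_eq_zero fun σ hσ => absurd (mem_filter.1 hσ).2 (by have := le_seqLength l hl σ; omega)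

lemma longPart_zero (hl : ∀ i, l i ≠ []) : longPart l c 0 = wordComb l c := by
  simp [longPart, wordComb, List.length_pos_iff, hl]

lemma longPart_eq_sum_take_drop (h : ℕ) :
    longPart l c h = ∑ i with h < (l i).length,
      c i • (wordOf K ((l i).take h) * wordOf K ((l i).drop h)) := by
  simp only [longPart, ← wordOf_append, List.take_append_drop]

lemma truncPow_succ (f m : ℕ) :
    truncPow l c f (m + 1) = ∑ σ : Fin m → Fin d with seqLength l σ ≤ f,
      ∑ i with (l i).length ≤ f - seqLength l σ, seqMonomial l c σ * (c i • wordOf K (l i)) := by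
  simp only [truncPow, seqMonomial, sum_filter, ← seqCoeff_snoc, ← wordProd_snoc,
    smul_mul_smul_comm]
  rw [← (Fin.snocEquiv fun _ => Fin d).sum_comp, Fintype.sum_prod_type_right]
  refine sum_congr rfl fun σ _ => ?_
  by_cases hσ : seqLength l σ ≤ f
  · rw [if_pos hσ]
    refine sum_congr rfl fun i _ => ?_
    change (if seqLength l (Fin.snoc σ i) ≤ f then _ else 0) = _
    rw [seqLength_snoc]
    split_ifs <;> first | rfl | (exfalso; omega)
  · rw [if_neg hσ]
    refine sum_eq_zero fun i _ => if_neg ?_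
    change ¬seqLength l (Fin.snoc σ i) ≤ f
    rw [seqLength_snoc]
    omega

lemma sum_homogPart_mul_longPart (f m : ℕ) :
    ∑ g ∈ range (f + 1), homogPart l c m g * longPart l c (f - g) =
      ∑ σ : Fin m → Fin d with seqLength l σ ≤ f,
        ∑ i with f - seqLength l σ < (l i).length, seqMonomial l c σ * (c i • wordOf K (l i)) := by
  rw [← sum_fiberwise_of_maps_to (g := seqLength l) (t := range (f + 1))
    fun σ hσ => mem_range.2 (Nat.lt_succ_of_le (mem_filter.1 hσ).2)]
  refine sum_congr rfl fun g hg => ?_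
  rw [homogPart, sum_mul, filter_filter]
  refine sum_congr (filter_congr fun σ _ => ?_) fun σ hσ => ?_
  · exact ⟨fun h => ⟨h ▸ Nat.le_of_lt_succ (mem_range.1 hg), h⟩, And.right⟩
  · rw [(mem_filter.1 hσ).2.2, longPart, mul_sum]

lemma truncPow_mul_wordComb (f m : ℕ) :
    truncPow l c f m * wordComb l c = truncPow l c f (m + 1) +
      ∑ g ∈ range (f + 1), homogPart l c m g * longPart l c (f - g) := by
  rw [truncPow_succ, sum_homogPart_mul_longPart, ← sum_add_distrib, truncPow, wordComb, sum_mul]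
  refine sum_congr rfl fun σ _ => ?_
  rw [mul_sum, ← sum_filter_add_sum_filter_not _ fun i => (l i).length ≤ f - seqLength l σ]
  simp only [not_le]

lemma wordComb_pow_eq_sum (hl : ∀ i, l i ≠ []) {f j : ℕ} (hfj : f < j) :
    wordComb l c ^ j = ∑ m ∈ range j, ∑ g ∈ range (f + 1),
      homogPart l c m g * longPart l c (f - g) * wordComb l c ^ (j - 1 - m) := by
  have htele : ∀ m ∈ range j, ∑ g ∈ range (f + 1),
      homogPart l c m g * longPart l c (f - g) * wordComb l c ^ (j - 1 - m) =
      truncPow l c f m * wordComb l c ^ (j - m) -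
        truncPow l c f (m + 1) * wordComb l c ^ (j - (m + 1)) := by
    intro m hm
    have hm := mem_range.1 hm
    rw [← sum_mul, show j - (m + 1) = j - 1 - m by omega, eq_sub_iff_add_eq', ← add_mul,
      ← truncPow_mul_wordComb, mul_assoc, ← pow_succ', show j - 1 - m + 1 = j - m by omega]
  rw [sum_congr rfl htele, sum_range_sub', truncPow_zero, truncPow_eq_zero l c hl hfj, one_mul,
    zero_mul, sub_zero, Nat.sub_zero]

lemma wordOf_mul_wordComb_pow_mul_mem (hl : ∀ i, l i ≠ []) (P : Submodule K (FA K))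
    {f j : ℕ} (hfj : f < j) (s : List (Fin 2)) (v : FA K)
    (hP : ∀ m g, m ≤ g → g ≤ f → wordOf K s * homogPart l c m g * longPart l c (f - g) *
      (wordComb l c ^ (j - 1 - m) * v) ∈ P) :
    wordOf K s * wordComb l c ^ j * v ∈ P := by
  rw [wordComb_pow_eq_sum l c hl hfj]
  simp only [mul_sum, sum_mul]
  refine sum_mem fun m _ => sum_mem fun g hg => ?_
  rcases lt_or_ge g m with hgm | hmg
  · simp [homogPart_eq_zero l c hl hgm]
  · simpa only [mul_assoc] using hP m g hmg (Nat.le_of_lt_succ (mem_range.1 hg))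

lemma mul_longPart_mul_mem_mul {P Q : Submodule K (FA K)} (h : ℕ) {a b : FA K}
    (hab : ∀ i, h < (l i).length →
      a * wordOf K ((l i).take h) ∈ P ∧ wordOf K ((l i).drop h) * b ∈ Q) :
    a * longPart l c h * b ∈ P * Q := by
  rw [longPart_eq_sum_take_drop, mul_sum, sum_mul]
  refine Submodule.sum_mem _ fun i hi => ?_
  obtain ⟨ha, hb⟩ := hab i (mem_filter.1 hi).2
  rw [mul_smul_comm, smul_mul_assoc, ← mul_assoc, mul_assoc _ _ b]
  exact Submodule.smul_mem _ _ (Submodule.mul_mem_mul ha hb)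

variable (K) in
def symWord (e : Fin d → ℕ) : FA K :=
  ∑ σ : Fin (∑ i, e i) → Fin d with seqCount σ = e, wordProd K l σ

lemma sum_wordProd_eq_symWord {m : ℕ} {e : Fin d → ℕ} (h : ∑ i, e i = m) :
    ∑ σ : Fin m → Fin d with seqCount σ = e, wordProd K l σ = symWord K l e := by
  subst h
  rfl

/-- Terms of the same letter counts have the same coefficient and degree, so the homogeneous
parts of `y ^ m` are combinations of symmetrized words. -/
lemma homogPart_mem_span_symWord {n m : ℕ} (hm : m ≤ n) (g : ℕ) :
    homogPart l c m g ∈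
      Submodule.span K (Set.range fun e : Fin d → Fin (n + 1) => symWord K l fun i => e i) := by
  rw [homogPart, ← sum_fiberwise_of_maps_to fun σ hσ => mem_image_of_mem seqCount hσ]
  refine Submodule.sum_mem _ fun e he => ?_
  obtain ⟨σ₀, hσ₀, rfl⟩ := mem_image.1 he
  have hfiber :
      ∑ σ ∈ {σ : Fin m → Fin d | seqLength l σ = g} with seqCount σ = seqCount σ₀,
        seqMonomial l c σ = (∏ i, c i ^ seqCount σ₀ i) • symWord K l (seqCount σ₀) := by
    rw [← sum_wordProd_eq_symWord l (sum_seqCount σ₀), smul_sum, filter_filter]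
    refine sum_congr (filter_congr fun σ _ => ?_) fun σ hσ => ?_
    · refine ⟨fun h => h.2, fun h => ⟨?_, h⟩⟩
      rw [seqLength_eq_sum_seqCount, h, ← seqLength_eq_sum_seqCount]
      exact (mem_filter.1 hσ₀).2
    · rw [seqMonomial, seqCoeff_eq_prod_pow_seqCount, (mem_filter.1 hσ).2]
  rw [hfiber]
  refine Submodule.smul_mem _ _
    (Submodule.subset_span ⟨fun i => ⟨seqCount σ₀ i, ?_⟩, rfl⟩)
  have := sum_seqCount σ₀ ▸ single_le_sum (fun i _ => Nat.zero_le (seqCount σ₀ i)) (mem_univ i)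
  omega

lemma exists_ofFn_take_eq {p : ℕ} {s : List (Fin 2)} (hs : s.length < p) :
    ∃ a : (Fin p → Fin 2) × Fin p, (List.ofFn a.1).take a.2 = s := by
  refine ⟨(fun j => s.getD j 0, ⟨s.length, hs⟩), List.ext_getElem (by simp; omega) ?_⟩
  intro i _ h
  simp [h]

variable (K) in
/-- A word of length `< p` is encoded as the prefix `(List.ofFn a.1).take a.2`. -/
def cutGen (n p : ℕ)
    (x : ((Fin p → Fin 2) × Fin p) × ((Fin p → Fin 2) × Fin p) × (Fin d → Fin (n + 1))) :
    FA K :=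
  wordOf K ((List.ofFn x.1.1).take x.1.2) * symWord K l (fun i => x.2.2 i) *
    wordOf K ((List.ofFn x.2.1.1).take x.2.1.2)

variable (K) in
def cutSpace (n p : ℕ) : Submodule K (FA K) :=
  Submodule.span K (Set.range (cutGen K l n p)) ⊓ Aspan K n

lemma finrank_cutSpace_le (n p : ℕ) :
    finrank K (cutSpace K l n p) ≤ (n + 1) ^ d * (2 * p ^ 2) * 4 ^ p := by
  have := FiniteDimensional.span_of_finite K (Set.finite_range (cutGen K l n p))
  refine (Submodule.finrank_mono inf_le_left).trans ((finrank_range_le_card _).trans ?_)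
  have h4 : (4 : ℕ) ^ p = 2 ^ p * 2 ^ p := by rw [← mul_pow]; rfl
  simp only [Fintype.card_prod, Fintype.card_fun, Fintype.card_fin, h4]
  nlinarith [Nat.zero_le ((n + 1) ^ d * p ^ 2 * 2 ^ p * 2 ^ p)]

lemma wordOf_mul_homogPart_mul_wordOf_mem_cutSpace {n p m g : ℕ} (hm : m ≤ n)
    {s t : List (Fin 2)} (hs : s.length < p) (ht : t.length < p)
    (hn : s.length + g + t.length = n) :
    wordOf K s * homogPart l c m g * wordOf K t ∈ cutSpace K l n p := by
  refine ⟨?_, hn ▸ mul_mem_Aspan (mul_mem_Aspan (wordOf_mem_Aspan s)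
    (homogPart_mem_Aspan l c m g)) (wordOf_mem_Aspan t)⟩
  obtain ⟨a, rfl⟩ := exists_ofFn_take_eq hs
  obtain ⟨b, rfl⟩ := exists_ofFn_take_eq ht
  have := Submodule.apply_mem_span_image_of_mem_span
    (LinearMap.mulLeft K (wordOf K ((List.ofFn a.1).take a.2)) ∘ₗ
      LinearMap.mulRight K (wordOf K ((List.ofFn b.1).take b.2)))
    (homogPart_mem_span_symWord l c hm g)
  refine Submodule.span_mono ?_ (by simpa [mul_assoc] using this)
  rintro _ ⟨_, ⟨e, rfl⟩, rfl⟩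
  exact ⟨(a, b, e), by simp [cutGen, mul_assoc]⟩

lemma wordOf_mul_wordComb_pow_mul_mem_cutSpace_mul_top (hl : ∀ i, l i ≠ []) {n p j : ℕ}
    (hlp : ∀ i, (l i).length ≤ p) (hpn : p ≤ n) (hj : n < j) {s : List (Fin 2)}
    (hs : s.length < p) (v : FA K) :
    wordOf K s * wordComb l c ^ j * v ∈ cutSpace K l n p * ⊤ := by
  refine wordOf_mul_wordComb_pow_mul_mem l c hl _ (f := n - s.length) (by omega) s v
    fun m g hmg hgf => mul_longPart_mul_mem_mul l c _ fun i hi => ⟨?_, Submodule.mem_top⟩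
  have := hlp i
  refine wordOf_mul_homogPart_mul_wordOf_mem_cutSpace l c (by omega) hs ?_ ?_ <;>
    simp only [List.length_take] <;> omega

lemma exists_add_eq_mul {n : ℕ} (hn : 0 < n) (a : ℕ) : ∃ k r, r < n ∧ a + r = k * n := by
  have h := Nat.div_add_mod (a + n - 1) n
  have h' := Nat.mod_lt (a + n - 1) hn
  exact ⟨(a + n - 1) / n, n - 1 - (a + n - 1) % n, by omega, by rw [mul_comm]; omega⟩

lemma wordOf_mul_wordComb_pow_mul_mem_iSup (hl : ∀ i, l i ≠ []) {n p j : ℕ}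
    (hlp : ∀ i, (l i).length ≤ p) (hp : 0 < p) (hpn : p ≤ n) (hj : 2 * n ≤ j)
    (u : List (Fin 2)) (v : FA K) :
    wordOf K u * wordComb l c ^ j * v ∈
      ⨆ k : ℕ, Aspan K (k * n) * cutSpace K l n p * ⊤ := by
  obtain ⟨k, r, hr, hk⟩ := exists_add_eq_mul (hp.trans_le hpn) u.length
  refine Submodule.mem_iSup_of_mem k ?_
  rw [mul_assoc]
  refine wordOf_mul_wordComb_pow_mul_mem l c hl _ (f := r) (by omega) u v fun m g hmg hgr => ?_
  have hu := mul_mem_Aspan (wordOf_mem_Aspan (K := K) u) (homogPart_mem_Aspan l c m g)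
  rcases hgr.lt_or_eq with hgr | rfl
  · refine mul_longPart_mul_mem_mul l c _ fun i hi => ⟨?_, ?_⟩
    · have := mul_mem_Aspan hu (wordOf_mem_Aspan (K := K) ((l i).take (r - g)))
      rwa [List.length_take, min_eq_left hi.le, show u.length + g + (r - g) = k * n by omega]
        at this
    · have := hlp i
      rw [← mul_assoc]
      refine wordOf_mul_wordComb_pow_mul_mem_cutSpace_mul_top l c hl hlp hpn
        (j := j - 1 - m) (by omega) ?_ v
      simp only [List.length_drop]
      omega
  · -- the crossing word may have length `p`, so it is absorbed into the power of `y` instead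
    rw [Nat.sub_self, longPart_zero l c hl, mul_assoc _ (wordComb l c),
      ← mul_assoc (wordComb l c), ← pow_succ', show j - 1 - m + 1 = j - m by omega]
    have hR := wordOf_mul_wordComb_pow_mul_mem_cutSpace_mul_top l c hl hlp hpn (j := j - m)
      (by omega) (s := []) hp v
    rw [wordOf_nil, one_mul] at hR
    exact Submodule.mul_mem_mul (by rwa [hk] at hu) hR

end Sequences

end FreeWords

open FreeWords

theorem lemma_4_1'_general {K : Type*} [Field K] (n p d : ℕ)
    (hp : 0 < p) (hpn : p ≤ n)
    (w : Fin d → FA K)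
    (hword : ∀ i, ∃ l : List (Fin 2), l ≠ [] ∧ l.length ≤ p ∧ w i = wordOf K l) :
    ∃ Y : Submodule K (FA K), Y ≤ Aspan K n ∧
      finrank K Y ≤ (n + 1) ^ d * (2 * p ^ 2) * 4 ^ p ∧
      ∀ y ∈ Submodule.span K (Set.range w), ∀ u v : FA K,
        u * y ^ (2 * n) * v ∈ ⨆ k : ℕ, Aspan K (k * n) * Y * (⊤ : Submodule K (FA K)) := by
  choose l hl hlp hw using hword
  refine ⟨cutSpace K l n p, inf_le_right, finrank_cutSpace_le l n p, fun y hy u v => ?_⟩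
  obtain ⟨c, rfl⟩ : ∃ c, wordComb l c = y := by
    obtain ⟨c, hc⟩ := Submodule.mem_span_range_iff_exists_fun K |>.1 hy
    exact ⟨c, by simpa [wordComb, hw] using hc⟩
  have hu : u ∈ Submodule.span K (Set.range (wordOf K)) := by
    rw [span_range_wordOf]
    trivial
  induction hu using Submodule.span_induction with
  | mem _ hs =>
    obtain ⟨s, rfl⟩ := hs
    exact wordOf_mul_wordComb_pow_mul_mem_iSup l c hl hlp hp hpn le_rfl s v
  | zero => simp
  | add a b _ _ ha hb => rw [add_mul, add_mul]; exact add_mem ha hb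
  | smul r a _ ha => rw [smul_mul_assoc, smul_mul_assoc]; exact Submodule.smul_mem _ r ha

/-- **Lemma 4.1 (explicit power `2n`).** Let `W` be a `d`-dimensional subspace of
`K⟨x,y⟩` spanned by `d` nonempty words of length at most `p`. Then there is a subspace
`Y ⊆ A(n)` of dimension at most `(n+1)^d·(2p²)·4^p` such that
`A·y^{2n}·A ⊆ Σ_{k=0}^∞ A(kn)·Y·A` for every `y ∈ W`. -/
theorem lemma_4_1' {K : Type*} [Field K] (n p d : ℕ)
    (hn : 0 < n) (hp : 0 < p) (hd : 0 < d) (hpn : p ≤ n)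
    (w : Fin d → FA K)
    (hword : ∀ i, ∃ l : List (Fin 2), l ≠ [] ∧ l.length ≤ p ∧ w i = wordOf K l)
    (hind : LinearIndependent K w) :
    ∃ Y : Submodule K (FA K), Y ≤ Aspan K n ∧
      finrank K Y ≤ (n + 1) ^ d * (2 * p ^ 2) * 4 ^ p ∧
      ∀ y ∈ Submodule.span K (Set.range w), ∀ u v : FA K,
        u * y ^ (2 * n) * v ∈ ⨆ k : ℕ, Aspan K (k * n) * Y * (⊤ : Submodule K (FA K)) :=
  lemma_4_1'_general n p d hp hpn w hword
end
end
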